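/- If X, Y are i.i.d. Gamma(b^(−1)x + 1, b) random variables with fixed x > 0, then E[(min{X,Y} − x)²] = bx + O_x(b^(3/2)) as b → 0⁺. -/

import Mathlib

/-!
With shape `a = x/b + 1` and rate `r = 1/b`, a Gamma variable has mean `x + b` and variance
`b(x + b)`. Writing `min(s, t) = (s + t - |s - t|)/2` reduces `E[(min{X,Y} - x)²]` to these two
moments and to `E[|X - Y|(X + Y)]`. In the joint density, `|s - t| (st)^(a-1)` is homogeneous of
degree `2a - 1` and `e^(-r(s+t))` depends on `s + t` only, so under the weight `|X - Y|` the sum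
`X + Y` has density proportional to `u^(2a) e^(-ru)`; hence `E[|X - Y|(X + Y)] = (2a + 1)/r ·
E|X - Y|`. This gives `E[(min{X,Y} - x)²] = bx + 2b² - (3b/2) E|X - Y|`, while
`E|X - Y| ≤ 2√(b(x + b))` by Cauchy–Schwarz.
-/

open MeasureTheory ProbabilityTheory Real Set
open scoped ENNReal

lemma lintegral_Ioi_comp_mul_left (f : ℝ → ℝ≥0∞) {c : ℝ} (hc : 0 < c) :
    ∫⁻ t in Ioi 0, f t = ENNReal.ofReal c * ∫⁻ w in Ioi 0, f (c * w) := by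
  conv_lhs => rw [← image_const_mul_Ioi_zero hc]
  rw [lintegral_image_eq_lintegral_abs_deriv_mul measurableSet_Ioi
      (fun w _ => ((hasDerivAt_id' w).const_mul c).hasDerivWithinAt)
      (mul_right_injective₀ hc.ne').injOn,
    lintegral_const_mul' _ _ ENNReal.ofReal_ne_top]
  simp [abs_of_pos hc]

lemma lintegral_Ioi_rpow_mul_comp_mul_left (h : ℝ → ℝ≥0∞) (e : ℝ) {c : ℝ} (hc : 0 < c) :
    ∫⁻ s in Ioi 0, ENNReal.ofReal (s ^ e) * h (c * s)
      = ENNReal.ofReal (c ^ (-(e + 1))) * ∫⁻ u in Ioi 0, ENNReal.ofReal (u ^ e) * h u := by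
  rw [lintegral_Ioi_comp_mul_left (fun u => ENNReal.ofReal (u ^ e) * h u) hc, ← mul_assoc,
    ← ENNReal.ofReal_mul (by positivity), ← lintegral_const_mul' _ _ ENNReal.ofReal_ne_top]
  refine setLIntegral_congr_fun measurableSet_Ioi fun s (hs : 0 < s) => ?_
  have hc_cancel : c ^ (-(e + 1)) * c * c ^ e = 1 := by
    rw [rpow_neg hc.le, rpow_add hc, rpow_one]
    field_simp
  rw [← mul_assoc, ← ENNReal.ofReal_mul (by positivity), mul_rpow hc.le hs.le,
    ← mul_assoc, hc_cancel, one_mul]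

/-- Substituting `t = s w` and then `s = u / (1 + w)`. -/
theorem lintegral_Ioi_Ioi_mul_comp_add_of_homogeneous {φ : ℝ → ℝ → ℝ≥0∞} {d : ℝ}
    (hφ : Measurable (φ 1))
    (hhom : ∀ c s t, 0 < c → 0 < s → 0 < t →
      φ (c * s) (c * t) = ENNReal.ofReal (c ^ d) * φ s t)
    {h : ℝ → ℝ≥0∞} (hh : Measurable h) :
    ∫⁻ s in Ioi 0, ∫⁻ t in Ioi 0, φ s t * h (s + t)
      = (∫⁻ w in Ioi 0, φ 1 w * ENNReal.ofReal ((1 + w) ^ (-(d + 2))))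
        * ∫⁻ u in Ioi 0, ENNReal.ofReal (u ^ (d + 1)) * h u := by
  have inner : ∀ s ∈ Ioi (0 : ℝ), ∫⁻ t in Ioi 0, φ s t * h (s + t)
      = ∫⁻ w in Ioi 0, ENNReal.ofReal (s ^ (d + 1)) * h ((1 + w) * s) * φ 1 w := by
    intro s (hs : 0 < s)
    rw [lintegral_Ioi_comp_mul_left _ hs, ← lintegral_const_mul' _ _ ENNReal.ofReal_ne_top]
    refine setLIntegral_congr_fun measurableSet_Ioi fun w (hw : 0 < w) => ?_
    have hφs := hhom s 1 w hs one_pos hw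
    rw [mul_one] at hφs
    rw [hφs, rpow_add hs, rpow_one, ENNReal.ofReal_mul (by positivity),
      show s + s * w = (1 + w) * s by ring]
    ring
  have outer : ∀ w ∈ Ioi (0 : ℝ),
      ∫⁻ s in Ioi 0, ENNReal.ofReal (s ^ (d + 1)) * h ((1 + w) * s) * φ 1 w
        = φ 1 w * ENNReal.ofReal ((1 + w) ^ (-(d + 2)))
          * ∫⁻ u in Ioi 0, ENNReal.ofReal (u ^ (d + 1)) * h u := by
    intro w (hw : 0 < w)
    rw [lintegral_mul_const _ (by fun_prop),
      lintegral_Ioi_rpow_mul_comp_mul_left _ _ (by linarith)]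
    ring_nf
  rw [setLIntegral_congr_fun measurableSet_Ioi inner, lintegral_lintegral_swap (by fun_prop),
    setLIntegral_congr_fun measurableSet_Ioi outer, lintegral_mul_const _ (by fun_prop)]

lemma lintegral_rpow_mul_exp_neg_mul_Ioi {s r : ℝ} (hs : 0 < s) (hr : 0 < r) :
    ∫⁻ t in Ioi 0, ENNReal.ofReal (t ^ (s - 1) * exp (-(r * t)))
      = ENNReal.ofReal ((1 / r) ^ s * Gamma s) := by
  have hint : IntegrableOn (fun t : ℝ => t ^ (s - 1) * exp (-(r * t))) (Ioi 0) := by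
    simpa [rpow_one] using
      integrableOn_rpow_mul_exp_neg_mul_rpow (p := 1) (by linarith) one_pos hr
  rw [← integral_rpow_mul_exp_neg_mul_Ioi hs hr, ofReal_integral_eq_lintegral_ofReal hint]
  exact (ae_restrict_iff' measurableSet_Ioi).mpr
    (ae_of_all _ fun t (ht : 0 < t) => by positivity)

lemma integral_abs_le_sqrt_integral_sq {Ω : Type*} [MeasurableSpace Ω] {μ : Measure Ω}
    [IsProbabilityMeasure μ] {f : Ω → ℝ} (hf : MemLp f 2 μ) :
    ∫ ω, |f ω| ∂μ ≤ √(∫ ω, f ω ^ 2 ∂μ) := by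
  have hvar := variance_nonneg |f| μ
  rw [variance_eq_sub hf.abs] at hvar
  simp only [Pi.pow_apply, Pi.abs_apply, sq_abs] at hvar
  exact le_sqrt_of_sq_le (by linarith)

lemma sq_min_sub_eq (s t x : ℝ) :
    (min s t - x) ^ 2 = ((s - x) ^ 2 + (t - x) ^ 2 - |s - t| * (s + t)) / 2 + x * |s - t| := by
  rcases le_total s t with h | h
  · rw [min_eq_left h, abs_of_nonpos (sub_nonpos.mpr h)]
    ring
  · rw [min_eq_right h, abs_of_nonneg (sub_nonneg.mpr h)]
    ring

namespace ProbabilityTheory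

lemma hasLaw_of_map_eq {Ω α : Type*} [MeasurableSpace Ω] [MeasurableSpace α]
    {P : Measure Ω} {μ : Measure α} [NeZero μ] {X : Ω → α} (h : P.map X = μ) : HasLaw X μ P :=
  ⟨AEMeasurable.of_map_ne_zero (h ▸ NeZero.ne μ), h⟩

section Gamma

variable {a r : ℝ}

instance sFinite_gammaMeasure : SFinite (gammaMeasure a r) := by
  unfold gammaMeasure
  infer_instance

lemma lintegral_gammaMeasure (f : ℝ → ℝ≥0∞) :
    ∫⁻ t, f t ∂gammaMeasure a r
      = ∫⁻ t in Ioi 0,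
          ENNReal.ofReal (r ^ a / Gamma a * t ^ (a - 1) * exp (-(r * t))) * f t := by
  rw [gammaMeasure, lintegral_withDensity_eq_lintegral_mul_non_measurable _
      (show Measurable (gammaPDF a r) from (measurable_gammaPDFReal a r).ennreal_ofReal)
      (ae_of_all _ fun _ => ENNReal.ofReal_lt_top),
    setLIntegral_congr Ioi_ae_eq_Ici, ← lintegral_indicator measurableSet_Ici]
  refine lintegral_congr fun t => ?_
  by_cases ht : 0 ≤ t
  · simp [indicator_of_mem (mem_Ici.mpr ht), gammaPDF_of_nonneg ht]
  · simp [indicator_of_notMem (show t ∉ Ici 0 from ht), gammaPDF_of_neg (not_le.mp ht)]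

lemma ae_nonneg_gammaMeasure : ∀ᵐ t ∂gammaMeasure a r, 0 ≤ t := by
  simp only [ae_iff, not_le]
  change gammaMeasure a r (Iio 0) = 0
  rw [gammaMeasure, withDensity_apply _ measurableSet_Iio]
  exact lintegral_gammaPDF_of_nonpos le_rfl

lemma lintegral_pow_gammaMeasure (ha : 0 < a) (hr : 0 < r) (k : ℕ) :
    ∫⁻ t, ENNReal.ofReal (t ^ k) ∂gammaMeasure a r
      = ENNReal.ofReal (Gamma (a + k) / (Gamma a * r ^ k)) := by
  have hmoment : ∀ t ∈ Ioi (0 : ℝ),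
      ENNReal.ofReal (r ^ a / Gamma a * t ^ (a - 1) * exp (-(r * t))) * ENNReal.ofReal (t ^ k)
        = ENNReal.ofReal (r ^ a / Gamma a)
          * ENNReal.ofReal (t ^ (a + k - 1) * exp (-(r * t))) := by
    intro t (ht : 0 < t)
    rw [← ENNReal.ofReal_mul (by positivity), ← ENNReal.ofReal_mul (by positivity),
      add_sub_right_comm, rpow_add ht, rpow_natCast]
    ring_nf
  rw [lintegral_gammaMeasure, setLIntegral_congr_fun measurableSet_Ioi hmoment,
    lintegral_const_mul' _ _ ENNReal.ofReal_ne_top,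
    lintegral_rpow_mul_exp_neg_mul_Ioi (by positivity) hr, ← ENNReal.ofReal_mul (by positivity),
    div_rpow zero_le_one hr.le, one_rpow, rpow_add hr, rpow_natCast]
  field_simp

lemma integrable_pow_gammaMeasure (ha : 0 < a) (hr : 0 < r) (k : ℕ) :
    Integrable (fun t => t ^ k) (gammaMeasure a r) := by
  refine ⟨by fun_prop, (hasFiniteIntegral_iff_ofReal
    (ae_nonneg_gammaMeasure.mono fun t ht => pow_nonneg ht k)).mpr ?_⟩
  rw [lintegral_pow_gammaMeasure ha hr]
  exact ENNReal.ofReal_lt_top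

lemma integral_pow_gammaMeasure (ha : 0 < a) (hr : 0 < r) (k : ℕ) :
    ∫ t, t ^ k ∂gammaMeasure a r = Gamma (a + k) / (Gamma a * r ^ k) := by
  rw [integral_eq_lintegral_of_nonneg_ae
      (ae_nonneg_gammaMeasure.mono fun t ht => pow_nonneg ht k) (by fun_prop),
    lintegral_pow_gammaMeasure ha hr, ENNReal.toReal_ofReal (by positivity)]

lemma integral_id_gammaMeasure (ha : 0 < a) (hr : 0 < r) :
    ∫ t, t ∂gammaMeasure a r = a / r := by
  have hΓ := (Gamma_pos_of_pos ha).ne'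
  simpa [Gamma_add_one ha.ne', field] using integral_pow_gammaMeasure ha hr 1

lemma integral_sq_gammaMeasure (ha : 0 < a) (hr : 0 < r) :
    ∫ t, t ^ 2 ∂gammaMeasure a r = a * (a + 1) / r ^ 2 := by
  rw [integral_pow_gammaMeasure ha hr, Nat.cast_ofNat, show a + 2 = a + 1 + 1 by ring,
    Gamma_add_one (by positivity), Gamma_add_one ha.ne']
  field_simp

lemma integral_sub_sq_gammaMeasure (ha : 0 < a) (hr : 0 < r) (x : ℝ) :
    ∫ t, (t - x) ^ 2 ∂gammaMeasure a r = a / r ^ 2 + (a / r - x) ^ 2 := by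
  have : IsProbabilityMeasure (gammaMeasure a r) := isProbabilityMeasure_gammaMeasure ha hr
  have hsq := integrable_pow_gammaMeasure ha hr 2
  have hid : Integrable (fun t => t) (gammaMeasure a r) := by
    simpa using integrable_pow_gammaMeasure ha hr 1
  have hquad : Integrable (fun t => t ^ 2 - 2 * x * t) (gammaMeasure a r) :=
    hsq.sub (hid.const_mul _)
  have hexpand : (fun t => (t - x) ^ 2) = fun t => t ^ 2 - 2 * x * t + x ^ 2 := by
    ext t
    ring
  rw [hexpand, integral_add hquad (integrable_const _), integral_sub hsq (hid.const_mul _),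
    integral_const_mul, integral_const, integral_sq_gammaMeasure ha hr,
    integral_id_gammaMeasure ha hr]
  simp only [probReal_univ, smul_eq_mul, one_mul]
  ring

lemma memLp_id_gammaMeasure (ha : 0 < a) (hr : 0 < r) :
    MemLp (fun t => t) 2 (gammaMeasure a r) :=
  (memLp_two_iff_integrable_sq (by fun_prop)).mpr (integrable_pow_gammaMeasure ha hr 2)

lemma integral_abs_sub_mean_gammaMeasure_le (ha : 0 < a) (hr : 0 < r) :
    ∫ t, |t - a / r| ∂gammaMeasure a r ≤ √a / r := by
  have : IsProbabilityMeasure (gammaMeasure a r) := isProbabilityMeasure_gammaMeasure ha hr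
  calc ∫ t, |t - a / r| ∂gammaMeasure a r
      ≤ √(∫ t, (t - a / r) ^ 2 ∂gammaMeasure a r) :=
        integral_abs_le_sqrt_integral_sq ((memLp_id_gammaMeasure ha hr).sub (memLp_const _))
    _ = √a / r := by
        rw [integral_sub_sq_gammaMeasure ha hr, sub_self, zero_pow two_ne_zero, add_zero,
          sqrt_div' _ (sq_nonneg r), sqrt_sq hr.le]

local notation "ν" => Measure.prod (gammaMeasure a r) (gammaMeasure a r)

lemma exists_lintegral_abs_sub_mul_comp_add_gammaMeasure_prod :
    ∃ K : ℝ≥0∞, ∀ g : ℝ → ℝ≥0∞, Measurable g →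
      ∫⁻ p, ENNReal.ofReal |p.1 - p.2| * g (p.1 + p.2) ∂ν
        = K * ∫⁻ u in Ioi 0, ENNReal.ofReal (u ^ (2 * a) * exp (-(r * u))) * g u := by
  set φ : ℝ → ℝ → ℝ≥0∞ := fun s t => ENNReal.ofReal (|s - t| * s ^ (a - 1) * t ^ (a - 1))
  have hφ_hom : ∀ c s t, 0 < c → 0 < s → 0 < t →
      φ (c * s) (c * t) = ENNReal.ofReal (c ^ (2 * a - 1)) * φ s t := by
    intro c s t hc hs ht
    have hc_pow : c ^ (2 * a - 1) = c * c ^ (a - 1) * c ^ (a - 1) := by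
      rw [show 2 * a - 1 = 1 + (a - 1) + (a - 1) by ring, rpow_add hc, rpow_add hc, rpow_one]
    simp only [φ]
    rw [← ENNReal.ofReal_mul (by positivity), ← mul_sub, abs_mul, abs_of_pos hc,
      mul_rpow hc.le hs.le, mul_rpow hc.le ht.le, hc_pow]
    ring_nf
  refine ⟨ENNReal.ofReal (r ^ a / Gamma a) ^ 2
    * ∫⁻ w in Ioi 0, φ 1 w * ENNReal.ofReal ((1 + w) ^ (-(2 * a - 1 + 2))), fun g hg => ?_⟩
  have hdensity : ∀ s ∈ Ioi (0 : ℝ), ∀ t ∈ Ioi (0 : ℝ),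
      ENNReal.ofReal (r ^ a / Gamma a * s ^ (a - 1) * exp (-(r * s)))
        * (ENNReal.ofReal (r ^ a / Gamma a * t ^ (a - 1) * exp (-(r * t)))
          * (ENNReal.ofReal |s - t| * g (s + t)))
      = ENNReal.ofReal (r ^ a / Gamma a) ^ 2
        * (φ s t * (ENNReal.ofReal (exp (-(r * (s + t)))) * g (s + t))) := by
    intro s (hs : 0 < s) t (ht : 0 < t)
    simp only [φ]
    rw [ENNReal.ofReal_mul' (exp_pos _).le, ENNReal.ofReal_mul' (by positivity),
      ENNReal.ofReal_mul' (exp_pos _).le, ENNReal.ofReal_mul' (by positivity),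
      ENNReal.ofReal_mul (by positivity), ENNReal.ofReal_mul (abs_nonneg _),
      mul_add, neg_add, exp_add, ENNReal.ofReal_mul (exp_pos _).le]
    ring
  have hh : Measurable fun u => ENNReal.ofReal (exp (-(r * u))) * g u := by fun_prop
  calc ∫⁻ p, ENNReal.ofReal |p.1 - p.2| * g (p.1 + p.2) ∂ν
      = ∫⁻ s in Ioi 0, ENNReal.ofReal (r ^ a / Gamma a) ^ 2
          * ∫⁻ t in Ioi 0, φ s t * (ENNReal.ofReal (exp (-(r * (s + t)))) * g (s + t)) := by
        rw [lintegral_prod _ (by fun_prop), lintegral_gammaMeasure]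
        refine setLIntegral_congr_fun measurableSet_Ioi fun s hs => ?_
        rw [lintegral_gammaMeasure, ← lintegral_const_mul' _ _ ENNReal.ofReal_ne_top,
          ← lintegral_const_mul' _ _ (by simp)]
        exact setLIntegral_congr_fun measurableSet_Ioi (hdensity s hs)
    _ = ENNReal.ofReal (r ^ a / Gamma a) ^ 2
          * ((∫⁻ w in Ioi 0, φ 1 w * ENNReal.ofReal ((1 + w) ^ (-(2 * a - 1 + 2))))
            * ∫⁻ u in Ioi 0, ENNReal.ofReal (u ^ (2 * a - 1 + 1))
              * (ENNReal.ofReal (exp (-(r * u))) * g u)) := by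
        rw [lintegral_const_mul' _ _ (by simp),
          lintegral_Ioi_Ioi_mul_comp_add_of_homogeneous (by fun_prop) hφ_hom hh]
    _ = _ := by
        rw [mul_assoc]
        congr 2
        refine setLIntegral_congr_fun measurableSet_Ioi fun u (hu : 0 < u) => ?_
        rw [sub_add_cancel, ENNReal.ofReal_mul (by positivity), mul_assoc]

lemma ae_nonneg_add_gammaMeasure_prod : ∀ᵐ p ∂ν, 0 ≤ p.1 + p.2 := by
  filter_upwards [Measure.quasiMeasurePreserving_fst.ae ae_nonneg_gammaMeasure,
    Measure.quasiMeasurePreserving_snd.ae ae_nonneg_gammaMeasure] with p h₁ h₂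
  exact add_nonneg h₁ h₂

lemma integral_abs_sub_mul_add_gammaMeasure_prod (ha : 0 < a) (hr : 0 < r) :
    ∫ p, |p.1 - p.2| * (p.1 + p.2) ∂ν = (2 * a + 1) / r * ∫ p, |p.1 - p.2| ∂ν := by
  obtain ⟨K, hK⟩ := exists_lintegral_abs_sub_mul_comp_add_gammaMeasure_prod (a := a) (r := r)
  have hmass : ∫⁻ u in Ioi 0, ENNReal.ofReal (u ^ (2 * a) * exp (-(r * u)))
      = ENNReal.ofReal ((1 / r) ^ (2 * a + 1) * Gamma (2 * a + 1)) := by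
    simpa using lintegral_rpow_mul_exp_neg_mul_Ioi (s := 2 * a + 1) (by positivity) hr
  have hmean :
      ∫⁻ u in Ioi 0, ENNReal.ofReal (u ^ (2 * a) * exp (-(r * u))) * ENNReal.ofReal u
        = ENNReal.ofReal ((1 / r) ^ (2 * a + 2) * Gamma (2 * a + 2)) := by
    rw [← lintegral_rpow_mul_exp_neg_mul_Ioi (by positivity) hr]
    refine setLIntegral_congr_fun measurableSet_Ioi fun u (hu : 0 < u) => ?_
    rw [← ENNReal.ofReal_mul (by positivity), show 2 * a + 2 - 1 = 2 * a + 1 by ring,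
      rpow_add_one hu.ne']
    ring_nf
  have hratio : ENNReal.ofReal ((1 / r) ^ (2 * a + 2) * Gamma (2 * a + 2))
      = ENNReal.ofReal ((2 * a + 1) / r)
        * ENNReal.ofReal ((1 / r) ^ (2 * a + 1) * Gamma (2 * a + 1)) := by
    rw [← ENNReal.ofReal_mul (by positivity), show 2 * a + 2 = 2 * a + 1 + 1 by ring,
      Gamma_add_one (by positivity), rpow_add_one (by positivity)]
    ring_nf
  have hfirst := hK (fun u => ENNReal.ofReal u) ENNReal.measurable_ofReal
  have hzeroth := hK (fun _ => 1) measurable_const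
  simp only [mul_one] at hzeroth
  have hnonneg : 0 ≤ᵐ[ν] fun p => |p.1 - p.2| * (p.1 + p.2) := by
    filter_upwards [ae_nonneg_add_gammaMeasure_prod] with p hp using mul_nonneg (abs_nonneg _) hp
  rw [integral_eq_lintegral_of_nonneg_ae (ae_of_all _ fun _ => abs_nonneg _) (by fun_prop),
    integral_eq_lintegral_of_nonneg_ae hnonneg (by fun_prop)]
  simp_rw [ENNReal.ofReal_mul (abs_nonneg _)]
  rw [hfirst, hzeroth, hmean, hmass, hratio, mul_left_comm, ENNReal.toReal_mul,
    ENNReal.toReal_ofReal (by positivity)]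

lemma integral_abs_sub_gammaMeasure_prod_le (ha : 0 < a) (hr : 0 < r) :
    ∫ p, |p.1 - p.2| ∂ν ≤ 2 * √a / r := by
  have : IsProbabilityMeasure (gammaMeasure a r) := isProbabilityMeasure_gammaMeasure ha hr
  have hX := memLp_id_gammaMeasure ha hr
  have hdev : Integrable (fun t => |t - a / r|) (gammaMeasure a r) :=
    ((hX.sub (memLp_const _)).integrable one_le_two).abs
  calc ∫ p, |p.1 - p.2| ∂ν
      ≤ ∫ p, (|p.1 - a / r| + |p.2 - a / r|) ∂ν := by
        refine integral_mono ?_ ((hdev.comp_fst _).add (hdev.comp_snd _)) fun p => ?_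
        · exact ((hX.comp_fst _).sub (hX.comp_snd _) |>.integrable one_le_two).abs
        · simpa only [abs_sub_comm (a / r)] using abs_sub_le p.1 (a / r) p.2
    _ = 2 * ∫ t, |t - a / r| ∂gammaMeasure a r := by
        rw [integral_add (hdev.comp_fst _) (hdev.comp_snd _),
          integral_fun_fst (fun t => |t - a / r|), integral_fun_snd (fun t => |t - a / r|)]
        simp only [probReal_univ, one_smul]
        ring
    _ ≤ 2 * √a / r := by
        rw [mul_div_assoc]
        gcongr
        exact integral_abs_sub_mean_gammaMeasure_le ha hr

lemma integral_min_sub_sq_gammaMeasure_prod (ha : 0 < a) (hr : 0 < r) (x : ℝ) :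
    ∫ p, (min p.1 p.2 - x) ^ 2 ∂ν
      = a / r ^ 2 + (a / r - x) ^ 2 - ((2 * a + 1) / (2 * r) - x) * ∫ p, |p.1 - p.2| ∂ν := by
  have : IsProbabilityMeasure (gammaMeasure a r) := isProbabilityMeasure_gammaMeasure ha hr
  have hX := (memLp_id_gammaMeasure ha hr).comp_fst (gammaMeasure a r)
  have hY := (memLp_id_gammaMeasure ha hr).comp_snd (gammaMeasure a r)
  have hX_sq : Integrable (fun p : ℝ × ℝ => (p.1 - x) ^ 2) ν :=
    (hX.sub (memLp_const x)).integrable_sq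
  have hY_sq : Integrable (fun p : ℝ × ℝ => (p.2 - x) ^ 2) ν :=
    (hY.sub (memLp_const x)).integrable_sq
  have hsum_sq : Integrable (fun p : ℝ × ℝ => (p.1 - x) ^ 2 + (p.2 - x) ^ 2) ν :=
    hX_sq.add hY_sq
  have hdiff : Integrable (fun p : ℝ × ℝ => |p.1 - p.2|) ν :=
    ((hX.sub hY).integrable one_le_two).abs
  have hdiff_sum : Integrable (fun p : ℝ × ℝ => |p.1 - p.2| * (p.1 + p.2)) ν :=
    (hX.sub hY).abs.integrable_mul (hX.add hY)
  have hhalf : Integrable (fun p : ℝ × ℝ =>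
      ((p.1 - x) ^ 2 + (p.2 - x) ^ 2 - |p.1 - p.2| * (p.1 + p.2)) / 2) ν :=
    (hsum_sq.sub hdiff_sum).div_const 2
  simp_rw [sq_min_sub_eq]
  rw [integral_add hhalf (hdiff.const_mul x), integral_div, integral_sub hsum_sq hdiff_sum,
    integral_add hX_sq hY_sq, integral_const_mul, integral_fun_fst (fun t => (t - x) ^ 2),
    integral_fun_snd (fun t => (t - x) ^ 2), integral_abs_sub_mul_add_gammaMeasure_prod ha hr,
    integral_sub_sq_gammaMeasure ha hr]
  simp only [probReal_univ, one_smul]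
  field_simp
  ring

end Gamma

-- Chen's gamma kernel at `x` with bandwidth `b`: shape `x / b + 1` and scale `b`, i.e. rate `b⁻¹`.
noncomputable def gammaKernel (x b : ℝ) : Measure ℝ := gammaMeasure (b⁻¹ * x + 1) b⁻¹

section GammaKernel

variable {x b : ℝ}

lemma isProbabilityMeasure_gammaKernel (hx : 0 ≤ x) (hb : 0 < b) :
    IsProbabilityMeasure (gammaKernel x b) :=
  isProbabilityMeasure_gammaMeasure (by positivity) (inv_pos.mpr hb)

lemma integral_min_sub_sq_gammaKernel_prod (hx : 0 ≤ x) (hb : 0 < b) :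
    ∫ p, (min p.1 p.2 - x) ^ 2 ∂(gammaKernel x b).prod (gammaKernel x b)
      = b * x + 2 * b ^ 2
        - 3 * b / 2 * ∫ p, |p.1 - p.2| ∂(gammaKernel x b).prod (gammaKernel x b) := by
  rw [gammaKernel, integral_min_sub_sq_gammaMeasure_prod (by positivity) (inv_pos.mpr hb)]
  field_simp
  ring

lemma integral_abs_sub_gammaKernel_prod_le (hx : 0 ≤ x) (hb : 0 < b) :
    ∫ p, |p.1 - p.2| ∂(gammaKernel x b).prod (gammaKernel x b) ≤ 2 * (√b * √(x + b)) := by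
  have hscale : √(b⁻¹ * x + 1) / b⁻¹ = √b * √(x + b) := by
    rw [div_inv_eq_mul, ← sqrt_mul hb.le, show b * (x + b) = (b⁻¹ * x + 1) * b ^ 2 by field_simp,
      sqrt_mul (by positivity), sqrt_sq hb.le]
  rw [← hscale, ← mul_div_assoc]
  exact integral_abs_sub_gammaMeasure_prod_le (by positivity) (inv_pos.mpr hb)

theorem abs_integral_min_sub_sq_gammaKernel_prod_sub_le (hx : 0 ≤ x) (hb : 0 < b) (hb1 : b ≤ 1) :
    |∫ p, (min p.1 p.2 - x) ^ 2 ∂(gammaKernel x b).prod (gammaKernel x b) - b * x|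
      ≤ (2 + 3 * √(x + 1)) * b ^ ((3 : ℝ) / 2) := by
  have := isProbabilityMeasure_gammaKernel hx hb
  rw [integral_min_sub_sq_gammaKernel_prod hx hb]
  have hT := integral_abs_sub_gammaKernel_prod_le hx hb
  set T := ∫ p, |p.1 - p.2| ∂(gammaKernel x b).prod (gammaKernel x b)
  have hT0 : 0 ≤ T := integral_nonneg fun _ => abs_nonneg _
  have hb32 : b ^ ((3 : ℝ) / 2) = b * √b := by
    rw [sqrt_eq_rpow, ← rpow_one_add' hb.le (by norm_num)]
    norm_num
  have hb_le : b ≤ √b := (le_sqrt' hb).mpr (by nlinarith)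
  have hT' : 3 * b / 2 * T ≤ 3 * (b * √b) * √(x + 1) :=
    calc 3 * b / 2 * T ≤ 3 * b / 2 * (2 * (√b * √(x + b))) := by gcongr
      _ ≤ 3 * (b * √b) * √(x + 1) := by
        have : √(x + b) ≤ √(x + 1) := sqrt_le_sqrt (by linarith)
        nlinarith [mul_nonneg hb.le (sqrt_nonneg b)]
  rw [hb32, abs_le]
  constructor <;> nlinarith [mul_nonneg hT0 hb.le, sqrt_nonneg (x + 1),
    mul_nonneg hb.le (sqrt_nonneg b)]

end GammaKernel

end ProbabilityTheory

/-- If, for each `b > 0`, `X b` and `Y b` are i.i.d. Gamma(shape `x/b + 1`, scale `b`)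
random variables, then `E[(min{X,Y} − x)²] = bx + O_x(b^(3/2))` as `b → 0⁺`. -/
theorem min_gamma_kernel_second_moment_asymp {Ω : Type*} [MeasureSpace Ω]
    [IsProbabilityMeasure (ℙ : Measure Ω)]
    (x : ℝ) (hx : 0 < x) (X Y : ℝ → Ω → ℝ)
    (hX : ∀ b, 0 < b → Measure.map (X b) ℙ = gammaMeasure (b⁻¹ * x + 1) b⁻¹)
    (hY : ∀ b, 0 < b → Measure.map (Y b) ℙ = gammaMeasure (b⁻¹ * x + 1) b⁻¹)
    (hindep : ∀ b, 0 < b → IndepFun (X b) (Y b) ℙ) :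
    ∃ C b₀ : ℝ, 0 < C ∧ 0 < b₀ ∧ ∀ b, 0 < b → b < b₀ →
      |(∫ ω, (min (X b ω) (Y b ω) - x) ^ 2 ∂ℙ) - b * x| ≤ C * b ^ ((3 : ℝ) / 2) := by
  refine ⟨2 + 3 * √(x + 1), 1, by positivity, one_pos, fun b hb hb1 => ?_⟩
  have := isProbabilityMeasure_gammaKernel hx.le hb
  have hlaw : HasLaw (fun ω => (X b ω, Y b ω)) ((gammaKernel x b).prod (gammaKernel x b)) ℙ :=
    (hindep b hb).hasLaw_prod (hasLaw_of_map_eq (hX b hb)) (hasLaw_of_map_eq (hY b hb))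
  have htransfer : ∫ ω, (min (X b ω) (Y b ω) - x) ^ 2 ∂ℙ
      = ∫ p, (min p.1 p.2 - x) ^ 2 ∂(gammaKernel x b).prod (gammaKernel x b) :=
    hlaw.integral_comp (f := fun p => (min p.1 p.2 - x) ^ 2) (by fun_prop)
  rw [htransfer]
  exact abs_integral_min_sub_sq_gammaKernel_prod_sub_le hx.le hb hb1.le
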